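/- Let F = F_1 · F_2 ≠ 0 where F_1 ∈ ℂ[x_1,...,x_m] and F_2 ∈ ℂ[y_1,...,y_n] are homogeneous. If 𝕏 ⊂ ℙ^{m+n−1} is a finite set of points with I(𝕏) ⊆ F^⊥, and 𝕐_1 is the projection of 𝕏 from V(X_1,...,X_m) onto V(Y_1,...,Y_n), then I(𝕐_1) ⊆ F_1^⊥ (the annihilator of F_1 computed in ℂ[X_1,...,X_m], extended by the variables Y_j), i.e., 𝕐_1 is apolar to F_1. -/

import Mathlib

/-!
Write `g₁ = g(X, 0)`. Since `g` vanishes on the projection of `𝕏`, `g₁` vanishes on `𝕏`, hence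
`g₁ ∘ (F₁F₂) = 0`. As `g₁` involves only the `X`-variables, it acts on the first factor alone:
`g₁ ∘ (F₁F₂) = (g₁ ∘ F₁)·F₂`, and `F₂ ≠ 0` gives `g₁ ∘ F₁ = 0`. Finally every monomial involving
some `Y_j` annihilates `F₁`, so `g ∘ F₁ = g₁ ∘ F₁`.
-/

open MvPolynomial
open scoped Classical

/-- Differentiation of `F` by the monomial with exponent vector `m`:
`∂^m F`, defined coefficientwise via descending factorials. -/
noncomputable def contract {σ : Type*} (m : σ →₀ ℕ) (F : MvPolynomial σ ℂ) : MvPolynomial σ ℂ :=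
  ∑ k ∈ F.support, monomial (k - m) (F.coeff k * m.prod fun i e => (Nat.descFactorial (k i) e : ℂ))

/-- The apolarity (differentiation) action: `apolar g F = g ∘ F`. -/
noncomputable def apolar {σ : Type*} (g F : MvPolynomial σ ℂ) : MvPolynomial σ ℂ :=
  ∑ m ∈ g.support, g.coeff m • contract m F

/-- Vanishing ideal of a set of (representative vectors of) projective points:
all polynomials vanishing on the corresponding lines through the origin. -/
noncomputable def vIdeal {σ : Type*} (S : Set (σ → ℂ)) : Ideal (MvPolynomial σ ℂ) :=
  ⨅ v ∈ S, ⨅ c : ℂ, RingHom.ker (MvPolynomial.eval (c • v))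

section Contract

variable {σ : Type*}

lemma contract_monomial (m k : σ →₀ ℕ) (c : ℂ) :
    contract m (monomial k c)
      = monomial (k - m) (c * m.prod fun i e => (Nat.descFactorial (k i) e : ℂ)) := by
  by_cases hc : c = 0
  · simp [hc, contract]
  · rw [contract, support_monomial, if_neg hc, Finset.sum_singleton, coeff_monomial, if_pos rfl]

lemma contract_eq_sum (m : σ →₀ ℕ) {F : MvPolynomial σ ℂ} {s : Finset (σ →₀ ℕ)}
    (hs : F.support ⊆ s) :
    contract m F = ∑ k ∈ s, contract m (monomial k (F.coeff k)) := by
  simp_rw [contract_monomial]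
  refine Finset.sum_subset hs fun k _ hk => ?_
  rw [notMem_support_iff.mp hk, zero_mul, map_zero]

lemma contract_add (m : σ →₀ ℕ) (F G : MvPolynomial σ ℂ) :
    contract m (F + G) = contract m F + contract m G := by
  rw [contract_eq_sum m (support_add : (F + G).support ⊆ F.support ∪ G.support),
    contract_eq_sum m (Finset.subset_union_left : F.support ⊆ _),
    contract_eq_sum m (Finset.subset_union_right : G.support ⊆ _), ← Finset.sum_add_distrib]
  simp_rw [contract_monomial, coeff_add, add_mul, map_add]

noncomputable def contractAddHom (m : σ →₀ ℕ) : MvPolynomial σ ℂ →+ MvPolynomial σ ℂ :=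
  AddMonoidHom.mk' (contract m) (contract_add m)

lemma contract_eq_zero_of_forall_not_le {k : σ →₀ ℕ} {F : MvPolynomial σ ℂ}
    (h : ∀ p ∈ F.support, ¬ k ≤ p) : contract k F = 0 := by
  refine Finset.sum_eq_zero fun p hp => ?_
  obtain ⟨i, hi⟩ : ∃ i, p i < k i := by simpa [Finsupp.le_def] using h p hp
  have hprod : (k.prod fun i e => (Nat.descFactorial (p i) e : ℂ)) = 0 :=
    Finset.prod_eq_zero (i := i) (Finsupp.mem_support_iff.mpr (by omega))
      (by simp only [Nat.descFactorial_eq_zero_iff_lt.mpr hi, Nat.cast_zero])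
  rw [hprod, mul_zero, map_zero]

lemma contract_monomial_mul_monomial_of_disjoint {k p q : σ →₀ ℕ}
    (h : Disjoint k.support q.support) (a b : ℂ) :
    contract k (monomial p a * monomial q b) = contract k (monomial p a) * monomial q b := by
  have hkq : ∀ i, k i = 0 ∨ q i = 0 := fun i => by
    by_contra! hi
    exact Finset.disjoint_left.mp h (Finsupp.mem_support_iff.mpr hi.1)
      (Finsupp.mem_support_iff.mpr hi.2)
  have hexp : p + q - k = p - k + q := Finsupp.ext fun i => by
    simp only [Finsupp.tsub_apply, Finsupp.add_apply]
    have := hkq i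
    omega
  have hprod : (k.prod fun i e => (Nat.descFactorial ((p + q) i) e : ℂ))
      = k.prod fun i e => (Nat.descFactorial (p i) e : ℂ) :=
    Finset.prod_congr rfl fun i hi => by
      simp only [Finsupp.add_apply, (hkq i).resolve_left (Finsupp.mem_support_iff.mp hi), add_zero]
  rw [monomial_mul, contract_monomial, contract_monomial, monomial_mul, hexp, hprod, mul_right_comm]

lemma contract_mul_of_disjoint (k : σ →₀ ℕ) (A : MvPolynomial σ ℂ) {B : MvPolynomial σ ℂ}
    (h : ∀ q ∈ B.support, Disjoint k.support q.support) :
    contract k (A * B) = contract k A * B := by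
  induction A using MvPolynomial.induction_on' with
  | monomial p a =>
    conv_lhs => rw [B.as_sum, Finset.mul_sum]
    conv_rhs => rw [B.as_sum, Finset.mul_sum]
    rw [show contract k = contractAddHom k from rfl, map_sum]
    exact Finset.sum_congr rfl fun q hq => contract_monomial_mul_monomial_of_disjoint (h q hq) _ _
  | add A₁ A₂ h₁ h₂ => rw [add_mul, contract_add, contract_add, h₁, h₂, add_mul]

end Contract

section Apolar

variable {σ : Type*}

lemma apolar_eq_sum (g F : MvPolynomial σ ℂ) {s : Finset (σ →₀ ℕ)} (hs : g.support ⊆ s) :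
    apolar g F = ∑ m ∈ s, g.coeff m • contract m F :=
  Finset.sum_subset hs fun k _ hk => by rw [notMem_support_iff.mp hk, zero_smul]

lemma apolar_congr_left {g g' F : MvPolynomial σ ℂ}
    (h : ∀ k, contract k F ≠ 0 → g.coeff k = g'.coeff k) : apolar g F = apolar g' F := by
  rw [apolar_eq_sum g F Finset.subset_union_left, apolar_eq_sum g' F Finset.subset_union_right]
  refine Finset.sum_congr rfl fun k _ => ?_
  by_cases hk : contract k F = 0
  · rw [hk, smul_zero, smul_zero]
  · rw [h k hk]

lemma apolar_mul_of_disjoint (g A : MvPolynomial σ ℂ) {B : MvPolynomial σ ℂ}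
    (h : ∀ k ∈ g.support, ∀ q ∈ B.support, Disjoint k.support q.support) :
    apolar g (A * B) = apolar g A * B := by
  rw [apolar, apolar, Finset.sum_mul]
  exact Finset.sum_congr rfl fun k hk => by
    rw [contract_mul_of_disjoint k A (h k hk), smul_mul_assoc]

end Apolar

section Rename

variable {σ τ : Type*} {f : σ → τ}

lemma apply_eq_zero_of_mem_support_rename {F : MvPolynomial σ ℂ} {p : τ →₀ ℕ}
    (hp : p ∈ (rename f F).support) {i : τ} (hi : i ∉ Set.range f) : p i = 0 := by
  obtain ⟨u, rfl, -⟩ := coeff_rename_ne_zero _ _ _ (mem_support_iff.mp hp)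
  exact Finsupp.mapDomain_of_notMem_range u i hi

lemma contract_rename_eq_zero {k : τ →₀ ℕ} {i : τ} (hi : i ∉ Set.range f) (hk : k i ≠ 0)
    (F : MvPolynomial σ ℂ) : contract k (rename f F) = 0 :=
  contract_eq_zero_of_forall_not_le fun p hp hkp => by
    have := hkp i
    rw [apply_eq_zero_of_mem_support_rename hp hi] at this
    omega

lemma coeff_rename_killCompl (hf : Function.Injective f) (g : MvPolynomial τ ℂ) {k : τ →₀ ℕ}
    (hk : ∀ i ∉ Set.range f, k i = 0) :
    (rename f (killCompl hf g)).coeff k = g.coeff k := by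
  have hsupp : ↑k.support ⊆ Set.range f := fun i hi => by
    by_contra h
    exact Finsupp.mem_support_iff.mp hi (hk i h)
  rw [← Finsupp.mapDomain_comapDomain f hf k hsupp, coeff_rename_mapDomain f hf, coeff_killCompl]

/-- `rename f (killCompl hf g)` keeps the monomials of `g` in the variables `f σ`; the others
annihilate every polynomial in those variables. -/
lemma apolar_rename_killCompl (hf : Function.Injective f) (g : MvPolynomial τ ℂ)
    (F : MvPolynomial σ ℂ) :
    apolar (rename f (killCompl hf g)) (rename f F) = apolar g (rename f F) :=
  apolar_congr_left fun k hk => coeff_rename_killCompl hf g fun i hi => by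
    by_contra h
    exact hk (contract_rename_eq_zero hi h F)

lemma eval_killCompl (hf : Function.Injective f) (v : σ → ℂ) (g : MvPolynomial τ ℂ) :
    eval v (killCompl hf g) = eval (Function.extend f v 0) g := by
  rw [killCompl, aeval_def, algebraMap_eq, ← eval_assoc]
  congr 2
  funext i
  by_cases hi : i ∈ Set.range f
  · obtain ⟨a, rfl⟩ := hi
    simp [hf.extend_apply]
  · have hi' : ¬∃ a, f a = i := hi
    simp [hi']

end Rename

lemma disjoint_support_of_mem_support_rename_inl_inr {α β : Type*}
    {P : MvPolynomial α ℂ} {Q : MvPolynomial β ℂ} {k q : (α ⊕ β) →₀ ℕ}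
    (hk : k ∈ (rename Sum.inl P).support) (hq : q ∈ (rename Sum.inr Q).support) :
    Disjoint k.support q.support :=
  Finset.disjoint_left.mpr fun i hki hqi => by
    rcases i with a | b
    · exact Finsupp.mem_support_iff.mp hqi (apply_eq_zero_of_mem_support_rename hq (by simp))
    · exact Finsupp.mem_support_iff.mp hki (apply_eq_zero_of_mem_support_rename hk (by simp))

lemma mem_vIdeal {σ : Type*} {S : Set (σ → ℂ)} {q : MvPolynomial σ ℂ} :
    q ∈ vIdeal S ↔ ∀ v ∈ S, ∀ c : ℂ, eval (c • v) q = 0 := by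
  simp [vIdeal, RingHom.mem_ker]

theorem statement7_general (m n : ℕ) (F₁ : MvPolynomial (Fin m) ℂ) (F₂ : MvPolynomial (Fin n) ℂ)
    (hF : (rename Sum.inl F₁ * rename Sum.inr F₂ : MvPolynomial (Fin m ⊕ Fin n) ℂ) ≠ 0)
    (𝕏 : Finset ((Fin m ⊕ Fin n) → ℂ))
    (hap : ∀ g ∈ vIdeal (↑𝕏 : Set ((Fin m ⊕ Fin n) → ℂ)),
      apolar g (rename Sum.inl F₁ * rename Sum.inr F₂) = 0) :
    ∀ g ∈ vIdeal ↑(𝕏.image fun v =>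
        Sum.elim (fun i : Fin m => v (Sum.inl i)) fun _ : Fin n => (0 : ℂ)),
      apolar g (rename Sum.inl F₁ : MvPolynomial (Fin m ⊕ Fin n) ℂ) = 0 := by
  intro g hg
  set g₁ := rename Sum.inl (killCompl Sum.inl_injective g)
  have hg₁ : g₁ ∈ vIdeal (↑𝕏 : Set ((Fin m ⊕ Fin n) → ℂ)) := by
    refine mem_vIdeal.mpr fun v hv c => ?_
    have hproj : Function.extend Sum.inl ((c • v) ∘ Sum.inl) 0
        = c • Sum.elim (fun i : Fin m => v (Sum.inl i)) fun _ : Fin n => (0 : ℂ) := by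
      funext i
      rcases i with a | b <;> simp [Sum.inl_injective.extend_apply]
    rw [eval_rename, eval_killCompl Sum.inl_injective, hproj]
    exact mem_vIdeal.mp hg _ (Finset.mem_image_of_mem _ hv) c
  have hprod : apolar g₁ (rename Sum.inl F₁) * rename Sum.inr F₂ = 0 := by
    rw [← apolar_mul_of_disjoint _ _ fun k hk q hq =>
      disjoint_support_of_mem_support_rename_inl_inr hk hq]
    exact hap g₁ hg₁
  rw [← apolar_rename_killCompl Sum.inl_injective]
  exact (mul_eq_zero.mp hprod).resolve_right (right_ne_zero_of_mul hF)

/-- If `F = F₁·F₂ ≠ 0` with `F₁ ∈ ℂ[x_1,…,x_m]`, `F₂ ∈ ℂ[y_1,…,y_n]` homogeneous, `𝕏` is a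
finite set of points apolar to `F`, and `𝕐₁` is the projection of `𝕏` from `V(X_1,…,X_m)`
onto `V(Y_1,…,Y_n)` (keeping the `x`-coordinates), then `𝕐₁` is apolar to `F₁`. -/
theorem statement7 (m n : ℕ) (F₁ : MvPolynomial (Fin m) ℂ) (F₂ : MvPolynomial (Fin n) ℂ)
    (d₁ d₂ : ℕ) (h₁ : F₁.IsHomogeneous d₁) (h₂ : F₂.IsHomogeneous d₂)
    (hF : (rename Sum.inl F₁ * rename Sum.inr F₂ : MvPolynomial (Fin m ⊕ Fin n) ℂ) ≠ 0)
    (𝕏 : Finset ((Fin m ⊕ Fin n) → ℂ)) (h0 : ∀ v ∈ 𝕏, v ≠ 0)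
    (hap : ∀ g ∈ vIdeal (↑𝕏 : Set ((Fin m ⊕ Fin n) → ℂ)),
      apolar g (rename Sum.inl F₁ * rename Sum.inr F₂) = 0) :
    ∀ g ∈ vIdeal ↑(𝕏.image fun v =>
        Sum.elim (fun i : Fin m => v (Sum.inl i)) fun _ : Fin n => (0 : ℂ)),
      apolar g (rename Sum.inl F₁ : MvPolynomial (Fin m ⊕ Fin n) ℂ) = 0 :=
  statement7_general m n F₁ F₂ hF 𝕏 hap
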